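/- arXiv:2109.14117 — 2 statements merged into one kernel-verified Lean document; each statement's English description precedes it below -/
import Mathlib

section
/- Let $T, L_1, \dots, L_N$ be random variables each with variance 1, $N \geq 1$. Define $r_{TL}^{(ave)} = \frac{1}{N}\sum_{i=1}^N \mathrm{Corr}(T, L_i)$ and $r_{LL}^{(ave)} = \frac{2}{N(N-1)}\sum_{i<j} \mathrm{Corr}(L_i, L_j)$ (with the convention $r_{LL}^{(ave)} \cdot N(N-1) = 2\sum_{i<j}\mathrm{Corr}(L_i,L_j)$, valid for any $N \ge 1$). Then $\left(r_{TL}^{(ave)}\right)^2 \leq \frac{(N-1)\, r_{LL}^{(ave)} + 1}{N}$, i.e. $-\sqrt{\frac{(N-1) r_{LL}^{(ave)}+1}{N}} \leq r_{TL}^{(ave)} \leq \sqrt{\frac{(N-1) r_{LL}^{(ave)}+1}{N}}$. -/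
/-!
With unit variances the correlations are covariances. Cauchy–Schwarz for the covariance of `T`
and `S = ∑ i, L i` gives `(∑ i, cov[T, L i])² ≤ Var[S] = N + 2 ∑_{i<j} cov[L i, L j]`, and
dividing by `N²` is the claim.
-/

open MeasureTheory ProbabilityTheory

/-- Covariance of two real random variables. -/
noncomputable def cov {Ω : Type*} [MeasurableSpace Ω] (μ : Measure Ω) (f g : Ω → ℝ) : ℝ :=
  ∫ ω, (f ω - ∫ x, f x ∂μ) * (g ω - ∫ x, g x ∂μ) ∂μ

/-- Pearson correlation of two real random variables. -/
noncomputable def corr {Ω : Type*} [MeasurableSpace Ω] (μ : Measure Ω) (f g : Ω → ℝ) : ℝ :=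
  cov μ f g / Real.sqrt (variance f μ * variance g μ)

lemma Finset.sum_sum_eq_sum_add_two_mul_sum_lt {ι R : Type*} [Fintype ι] [LinearOrder ι]
    [CommSemiring R] {c : ι → ι → R} (hc : ∀ i j, c i j = c j i) :
    ∑ i, ∑ j, c i j = ∑ i, c i i + 2 * ∑ i, ∑ j with i < j, c i j := by
  have hsplit (i j : ι) : c i j =
      (if i < j then c i j else 0) + (if i = j then c i j else 0) + (if j < i then c i j else 0) := by
    rcases lt_trichotomy i j with h | rfl | h
    · simp [h, h.ne, h.not_gt]
    · simp
    · simp [h, h.ne', h.not_gt]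
  have hlower : ∑ i, ∑ j with j < i, c i j = ∑ i, ∑ j with i < j, c i j := by
    simp only [Finset.sum_filter]
    rw [Finset.sum_comm]
    exact Finset.sum_congr rfl fun i _ => Finset.sum_congr rfl fun j _ => by rw [hc j i]
  calc ∑ i, ∑ j, c i j
      = ∑ i, ∑ j, ((if i < j then c i j else 0) + (if i = j then c i j else 0) +
          (if j < i then c i j else 0)) :=
        Finset.sum_congr rfl fun i _ => Finset.sum_congr rfl fun j _ => hsplit i j
    _ = ∑ i, c i i + 2 * ∑ i, ∑ j with i < j, c i j := by
        simp only [Finset.sum_add_distrib, Finset.sum_ite_eq, Finset.mem_univ, if_true,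
          ← Finset.sum_filter, hlower]
        ring

section

variable {Ω : Type*} [MeasurableSpace Ω] {μ : Measure Ω}

lemma cov_eq_covariance (f g : Ω → ℝ) : cov μ f g = cov[f, g; μ] := rfl

lemma corr_eq_covariance {f g : Ω → ℝ} (hf : Var[f; μ] = 1) (hg : Var[g; μ] = 1) :
    corr μ f g = cov[f, g; μ] := by
  simp [corr, hf, hg, cov_eq_covariance]

namespace ProbabilityTheory

lemma sq_covariance_le_variance_mul_variance [IsFiniteMeasure μ] {X Y : Ω → ℝ}
    (hX : MemLp X 2 μ) (hY : MemLp Y 2 μ) :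
    cov[X, Y; μ] ^ 2 ≤ Var[X; μ] * Var[Y; μ] := by
  have hquad (t : ℝ) : 0 ≤ Var[X; μ] * (t * t) + 2 * cov[X, Y; μ] * t + Var[Y; μ] := by
    have := variance_add (hX.const_smul t) hY
    rw [covariance_smul_left, variance_smul] at this
    nlinarith [variance_nonneg (t • X + Y) μ]
  have := discrim_le_zero hquad
  rw [discrim] at this
  linarith

variable {ι : Type*} [Fintype ι] [LinearOrder ι] {L : ι → Ω → ℝ}

lemma variance_sum_eq_card_add_two_mul_sum_lt [IsFiniteMeasure μ]
    (hL : ∀ i, MemLp (L i) 2 μ) (hvar : ∀ i, Var[L i; μ] = 1) :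
    Var[∑ i, L i; μ] = Fintype.card ι + 2 * ∑ i, ∑ j with i < j, cov[L i, L j; μ] := by
  rw [variance_sum hL,
    Finset.sum_sum_eq_sum_add_two_mul_sum_lt fun i j => covariance_comm (L i) (L j)]
  simp [covariance_self (hL _).aemeasurable, hvar]

lemma sq_sum_covariance_le [IsFiniteMeasure μ] {T : Ω → ℝ} (hT : MemLp T 2 μ)
    (hL : ∀ i, MemLp (L i) 2 μ) (hTvar : Var[T; μ] = 1) (hvar : ∀ i, Var[L i; μ] = 1) :
    (∑ i, cov[T, L i; μ]) ^ 2 ≤ Fintype.card ι + 2 * ∑ i, ∑ j with i < j, cov[L i, L j; μ] := by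
  rw [← covariance_sum_right hL hT, ← variance_sum_eq_card_add_two_mul_sum_lt hL hvar,
    ← one_mul Var[_; μ], ← hTvar]
  exact sq_covariance_le_variance_mul_variance hT (memLp_finsetSum' _ fun i _ => hL i)

end ProbabilityTheory

end

theorem stmt2_general {Ω : Type*} [MeasurableSpace Ω] (μ : Measure Ω) [IsProbabilityMeasure μ]
    (N : ℕ) (T : Ω → ℝ) (L : Fin N → Ω → ℝ)
    (hTmem : MemLp T 2 μ) (hmem : ∀ i, MemLp (L i) 2 μ)
    (hTvar : variance T μ = 1) (hvar : ∀ i, variance (L i) μ = 1) :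
    ((1 / (N : ℝ)) * ∑ i : Fin N, corr μ T (L i)) ^ 2 ≤
      ((N - 1 : ℝ) *
          ((2 / (N * (N - 1) : ℝ)) *
            ∑ i : Fin N, ∑ j ∈ Finset.univ.filter (fun j => i < j), corr μ (L i) (L j)) + 1) /
        N := by
  simp only [corr_eq_covariance hTvar (hvar _), corr_eq_covariance (hvar _) (hvar _)]
  have key := sq_sum_covariance_le hTmem hmem hTvar hvar
  rw [Fintype.card_fin] at key
  set a := ∑ i, cov[T, L i; μ]
  set p := ∑ i : Fin N, ∑ j with i < j, cov[L i, L j; μ]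
  -- At `N = 1` the factor `2 / (N * (N - 1))` is a junk `2 / 0`, but then there are no pairs.
  have hpair : (N - 1 : ℝ) * (2 / (N * (N - 1)) * p) = 2 * p / N := by
    rcases eq_or_ne N 1 with rfl | hN
    · simp [p, Finset.filter_singleton]
    · have : (N - 1 : ℝ) ≠ 0 := sub_ne_zero.mpr (by exact_mod_cast hN)
      field_simp
  calc (1 / (N : ℝ) * a) ^ 2 = a ^ 2 / N ^ 2 := by ring
    _ ≤ (N + 2 * p) / N ^ 2 := by gcongr
    _ = (2 * p / N + 1) / N := by
        rcases eq_or_ne (N : ℝ) 0 with hN | hN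
        · simp [hN]
        · field_simp
          ring
    _ = _ := by rw [hpair]

theorem stmt2 {Ω : Type*} [MeasurableSpace Ω] (μ : Measure Ω) [IsProbabilityMeasure μ]
    (N : ℕ) (hN : 1 ≤ N) (T : Ω → ℝ) (L : Fin N → Ω → ℝ)
    (hTmem : MemLp T 2 μ) (hmem : ∀ i, MemLp (L i) 2 μ)
    (hTvar : variance T μ = 1) (hvar : ∀ i, variance (L i) μ = 1) :
    ((1 / (N : ℝ)) * ∑ i : Fin N, corr μ T (L i)) ^ 2 ≤
      ((N - 1 : ℝ) *
          ((2 / (N * (N - 1) : ℝ)) *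
            ∑ i : Fin N, ∑ j ∈ Finset.univ.filter (fun j => i < j), corr μ (L i) (L j)) + 1) /
        N :=
  stmt2_general μ N T L hTmem hmem hTvar hvar
end

section
/- Let $T$ and $L$ be $\{0,1\}$-valued random variables with $\alpha = P(T=1) \in (0,1)$ and accuracy $p = P(T=L) > 0$. Suppose $\beta = P(T=1,L=1)/p = 1/2$, i.e. $P(T=1,L=1) = P(T=0,L=0)$. Assume $0 < P(L=1) < 1$. Then the accuracy satisfies $p = 2\alpha(1-\alpha)(1 + r_{T,L})$, where $r_{T,L}$ is the Pearson correlation between $T$ and $L$. -/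
/-!
Write `T = 1_A` and `L = 1_B`. For indicators the covariance is `P(A ∩ B) - P(A) P(B)` and the
variances are `P(A)(1 - P(A))`, `P(B)(1 - P(B))`. The accuracy is `p = P(A ∩ B) + P(Aᶜ ∩ Bᶜ)`,
and `β = 1/2` says that these two summands agree. Since
`P(A ∩ B) - P(Aᶜ ∩ Bᶜ) = P(A) + P(B) - 1`, this forces `P(B) = 1 - α`, so both variances equal
`α(1 - α)` and `r = (p/2 - α(1 - α)) / (α(1 - α))`, which is the claim solved for `p`.
-/

open MeasureTheory ProbabilityTheory

open Set

lemma indicator_setOf_eq_one_eq_self {Ω : Type*} {f : Ω → ℝ} (hf : ∀ ω, f ω = 0 ∨ f ω = 1) :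
    {ω | f ω = 1}.indicator 1 = f := by
  funext ω
  rcases hf ω with h | h <;> simp [h]

lemma setOf_eq_eq_inter_union_compl_inter {Ω : Type*} {f g : Ω → ℝ} (hf : ∀ ω, f ω = 0 ∨ f ω = 1)
    (hg : ∀ ω, g ω = 0 ∨ g ω = 1) :
    {ω | f ω = g ω} =
      ({ω | f ω = 1} ∩ {ω | g ω = 1}) ∪ ({ω | f ω = 1}ᶜ ∩ {ω | g ω = 1}ᶜ) := by
  ext ω
  rcases hf ω with h₁ | h₁ <;> rcases hg ω with h₂ | h₂ <;> simp [h₁, h₂]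

section

variable {Ω : Type*} [MeasurableSpace Ω] {μ : Measure Ω} [IsProbabilityMeasure μ] {A B : Set Ω}

lemma measureReal_inter_sub_measureReal_compl_inter (hA : MeasurableSet A)
    (hB : MeasurableSet B) :
    μ.real (A ∩ B) - μ.real (Aᶜ ∩ Bᶜ) = μ.real A + μ.real B - 1 := by
  rw [← compl_union, probReal_compl_eq_one_sub (hA.union hB)]
  linarith [measureReal_union_add_inter (μ := μ) (s := A) hB]

lemma cov_indicator_one (hA : MeasurableSet A) (hB : MeasurableSet B) :
    cov μ (A.indicator 1) (B.indicator 1) = μ.real (A ∩ B) - μ.real A * μ.real B := by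
  have hLp : ∀ {s : Set Ω}, MeasurableSet s → MemLp (s.indicator (1 : Ω → ℝ)) 2 μ :=
    fun hs => memLp_indicator_const 2 hs 1 (Or.inr (measure_ne_top μ _))
  change covariance _ _ μ = _
  rw [covariance_eq_sub (hLp hA) (hLp hB), ← inter_indicator_one, integral_indicator_one hA,
    integral_indicator_one hB, integral_indicator_one (hA.inter hB)]

lemma variance_indicator_one (hA : MeasurableSet A) :
    variance (A.indicator 1) μ = μ.real A * (1 - μ.real A) := by
  rw [← covariance_self (measurable_one.indicator hA).aemeasurable]
  change cov μ _ _ = _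
  rw [cov_indicator_one hA hA, inter_self]
  ring

lemma corr_indicator_one (hA : MeasurableSet A) (hB : MeasurableSet B) :
    corr μ (A.indicator 1) (B.indicator 1) =
      (μ.real (A ∩ B) - μ.real A * μ.real B) /
        √(μ.real A * (1 - μ.real A) * (μ.real B * (1 - μ.real B))) := by
  rw [corr, cov_indicator_one hA hB, variance_indicator_one hA, variance_indicator_one hB]

end

theorem stmt8_general {Ω : Type*} [MeasurableSpace Ω] (μ : Measure Ω) [IsProbabilityMeasure μ]
    (T L : Ω → ℝ) (hTm : Measurable T) (hLm : Measurable L)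
    (hT01 : ∀ ω, T ω = 0 ∨ T ω = 1) (hL01 : ∀ ω, L ω = 0 ∨ L ω = 1)
    (α p : ℝ)
    (hα : α = (μ {ω | T ω = 1}).toReal)
    (hp : p = (μ {ω | T ω = L ω}).toReal)
    (hβ : (μ {ω | T ω = 1 ∧ L ω = 1}).toReal / p = 1 / 2)
    (hα0 : 0 < α) (hα1 : α < 1) :
    p = 2 * α * (1 - α) * (1 + corr μ T L) := by
  set A := {ω | T ω = 1}
  set B := {ω | L ω = 1}
  have hA : MeasurableSet A := hTm (measurableSet_singleton 1)
  have hB : MeasurableSet B := hLm (measurableSet_singleton 1)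
  replace hα : α = μ.real A := hα
  replace hp : p = μ.real (A ∩ B) + μ.real (Aᶜ ∩ Bᶜ) := by
    rw [hp, setOf_eq_eq_inter_union_compl_inter hT01 hL01]
    exact measureReal_union (disjoint_compl_right.mono inter_subset_left inter_subset_left)
      (hA.compl.inter hB.compl)
  -- `x / 0 = 0`, so `hβ` already excludes `p = 0`.
  have hp0 : p ≠ 0 := by
    rintro rfl
    norm_num at hβ
  have hAB : μ.real (A ∩ B) = p / 2 := by
    replace hβ : μ.real (A ∩ B) / p = 1 / 2 := hβ
    linarith [(div_eq_iff hp0).mp hβ]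
  have hBα : μ.real B = 1 - α := by
    linarith [measureReal_inter_sub_measureReal_compl_inter (μ := μ) hA hB]
  have hvar : √(α * (1 - α) * ((1 - α) * (1 - (1 - α)))) = α * (1 - α) := by
    rw [show α * (1 - α) * ((1 - α) * (1 - (1 - α))) = (α * (1 - α)) ^ 2 by ring,
      Real.sqrt_sq (by nlinarith)]
  rw [← indicator_setOf_eq_one_eq_self hT01, ← indicator_setOf_eq_one_eq_self hL01,
    corr_indicator_one hA hB, ← hα, hBα, hAB, hvar]
  field_simp [show 1 - α ≠ 0 by linarith]
  ring

theorem stmt8 {Ω : Type*} [MeasurableSpace Ω] (μ : Measure Ω) [IsProbabilityMeasure μ]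
    (T L : Ω → ℝ) (hTm : Measurable T) (hLm : Measurable L)
    (hT01 : ∀ ω, T ω = 0 ∨ T ω = 1) (hL01 : ∀ ω, L ω = 0 ∨ L ω = 1)
    (α p : ℝ)
    (hα : α = (μ {ω | T ω = 1}).toReal)
    (hp : p = (μ {ω | T ω = L ω}).toReal)
    (hβ : (μ {ω | T ω = 1 ∧ L ω = 1}).toReal / p = 1 / 2)
    (hα0 : 0 < α) (hα1 : α < 1) (hp0 : 0 < p)
    (hL0 : 0 < (μ {ω | L ω = 1}).toReal) (hL1 : (μ {ω | L ω = 1}).toReal < 1) :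
    p = 2 * α * (1 - α) * (1 + corr μ T L) :=
  stmt8_general μ T L hTm hLm hT01 hL01 α p hα hp hβ hα0 hα1
end
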